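/- Let D ≥ 1, θ₁ > 0, θ̂ > 0, w, v ∈ ℝ^D, and for τ ∈ [0,1] define the vector A(v,w,τ) ∈ ℝ^D componentwise by A_d = [(θ̂−1)τ+1] v_d + w_d τ, together with R(τ) = (θ̂−1)/((θ̂−1)τ+1) and S(τ) = 1/((θ̂−1)τ+1). Then for every multi-index α ∈ ℕ^D and τ ∈ [0,1], ∂/∂τ 𝓗_{θ₁,α}(A(v,w,τ)) = −Σ_{d=1}^D [ θ₁ R(τ) 𝓗_{θ₁,α+2e_d}(A(v,w,τ)) + w_d √θ₁ S(τ) 𝓗_{θ₁,α+e_d}(A(v,w,τ)) + (α_d+1) R(τ) 𝓗_{θ₁,α}(A(v,w,τ)) ]. -/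

import Mathlib

/-!
`Hb θ α` is a product of one-dimensional Hermite functions
`φ_n(y) = (2π)^(-1/2) θ^(-(n+1)/2) He_n(y) e^(-y²/2)`. Two facts about them drive the proof:
`φ_n' = -√θ φ_{n+1}`, from `He_{n+1} = x He_n - He_n'`, and the three-term recurrence
`y √θ φ_{n+1}(y) = θ φ_{n+2}(y) + (n+1) φ_n(y)`, from `He_n' = n He_{n-1}`.
By the product rule, `d/dτ Hb θ₁ α (A τ) = -∑_d √θ₁ A_d' Hb θ₁ (α + e_d) (A τ)`, and
`A_d' = (θ̂-1) v_d + w_d = R A_d + S w_d`; the recurrence turns the `R A_d` part into the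
`α + 2e_d` and `α` terms.
-/

open MeasureTheory

/-- The probabilists' Hermite polynomial `He n`, evaluated at a real number. -/
noncomputable def He (n : ℕ) (x : ℝ) : ℝ :=
  Polynomial.aeval x (Polynomial.hermite n)

/-- The basis function `𝓗_{θ,α}(v) = ∏_d (2π)^(-1/2) θ^(-(α_d+1)/2) He_{α_d}(v_d) e^(-v_d²/2)`. -/
noncomputable def Hb {D : ℕ} (θ : ℝ) (α : Fin D → ℕ) (v : Fin D → ℝ) : ℝ :=
  ∏ d, ((Real.sqrt (2 * Real.pi))⁻¹ * θ ^ (-(((α d : ℝ) + 1) / 2)) * He (α d) (v d) *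
    Real.exp (-(v d) ^ 2 / 2))

open Polynomial in
theorem Polynomial.derivative_hermite_succ (n : ℕ) :
    derivative (hermite (n + 1)) = (n + 1 : ℕ) • hermite n := by
  induction n with
  | zero => simp [hermite_succ, hermite_zero]
  | succ n ih =>
    rw [hermite_succ (n + 1), derivative_sub, derivative_mul, derivative_X, one_mul, ih,
      derivative_smul, hermite_succ n, mul_smul_comm]
    module

theorem He_succ (n : ℕ) (x : ℝ) :
    He (n + 1) x
      = x * He n x - Polynomial.aeval x (Polynomial.derivative (Polynomial.hermite n)) := by
  simp [He, Polynomial.hermite_succ]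

theorem He_add_two (n : ℕ) (x : ℝ) :
    He (n + 2) x = x * He (n + 1) x - (n + 1) * He n x := by
  rw [He_succ (n + 1), Polynomial.derivative_hermite_succ, map_nsmul, nsmul_eq_mul]
  push_cast
  rfl

theorem hasDerivAt_He_mul_exp (n : ℕ) (x : ℝ) :
    HasDerivAt (fun y => He n y * Real.exp (-y ^ 2 / 2))
      (-(He (n + 1) x * Real.exp (-x ^ 2 / 2))) x := by
  have hHe : HasDerivAt (He n)
      (Polynomial.aeval x (Polynomial.derivative (Polynomial.hermite n))) x :=
    (Polynomial.hermite n).hasDerivAt_aeval x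
  have hexponent : HasDerivAt (fun y : ℝ => -y ^ 2 / 2) (-x) x :=
    ((hasDerivAt_pow 2 x).neg.div_const 2).congr_deriv (by norm_num; ring)
  refine (hHe.mul hexponent.exp).congr_deriv ?_
  rw [He_succ]
  ring

noncomputable def hermiteFun (θ : ℝ) (n : ℕ) (y : ℝ) : ℝ :=
  (Real.sqrt (2 * Real.pi))⁻¹ * θ ^ (-(((n : ℝ) + 1) / 2)) * He n y * Real.exp (-y ^ 2 / 2)

section hermiteFun

variable {θ : ℝ}

theorem Real.rpow_neg_succ_div_two (hθ : 0 ≤ θ) (n : ℕ) :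
    θ ^ (-(((n : ℝ) + 1) / 2)) = (Real.sqrt θ)⁻¹ ^ (n + 1) := by
  rw [Real.sqrt_eq_rpow, ← Real.rpow_natCast, Real.inv_rpow (by positivity),
    ← Real.rpow_mul hθ, ← Real.rpow_neg hθ]
  push_cast
  ring_nf

theorem hermiteFun_eq (hθ : 0 ≤ θ) (n : ℕ) (y : ℝ) :
    hermiteFun θ n y
      = (Real.sqrt (2 * Real.pi))⁻¹ * (Real.sqrt θ)⁻¹ ^ (n + 1) * He n y *
          Real.exp (-y ^ 2 / 2) := by
  rw [hermiteFun, Real.rpow_neg_succ_div_two hθ]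

theorem hasDerivAt_hermiteFun (hθ : 0 < θ) (n : ℕ) (x : ℝ) :
    HasDerivAt (hermiteFun θ n) (-(Real.sqrt θ * hermiteFun θ (n + 1) x)) x := by
  have hsqrt : Real.sqrt θ ≠ 0 := (Real.sqrt_pos.2 hθ).ne'
  have hfun : hermiteFun θ n = fun y =>
      (Real.sqrt (2 * Real.pi))⁻¹ * (Real.sqrt θ)⁻¹ ^ (n + 1) * (He n y * Real.exp (-y ^ 2 / 2)) := by
    funext y
    rw [hermiteFun_eq hθ.le]
    ring
  rw [hfun]
  refine ((hasDerivAt_He_mul_exp n x).const_mul _).congr_deriv ?_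
  rw [hermiteFun_eq hθ.le, pow_succ' _ (n + 1)]
  field_simp

theorem mul_sqrt_mul_hermiteFun_succ (hθ : 0 < θ) (n : ℕ) (x : ℝ) :
    x * Real.sqrt θ * hermiteFun θ (n + 1) x
      = θ * hermiteFun θ (n + 2) x + (n + 1) * hermiteFun θ n x := by
  rw [hermiteFun_eq hθ.le, hermiteFun_eq hθ.le, hermiteFun_eq hθ.le, He_add_two]
  obtain ⟨s, hs, rfl⟩ : ∃ s, 0 < s ∧ θ = s ^ 2 :=
    ⟨Real.sqrt θ, Real.sqrt_pos.2 hθ, (Real.sq_sqrt hθ.le).symm⟩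
  rw [Real.sqrt_sq hs.le]
  simp only [inv_pow]
  field_simp
  ring

end hermiteFun

section Hb

variable {D : ℕ}

theorem Hb_eq_prod (θ : ℝ) (α : Fin D → ℕ) (v : Fin D → ℝ) :
    Hb θ α v = ∏ d, hermiteFun θ (α d) (v d) :=
  rfl

theorem Hb_add_single (θ : ℝ) (α : Fin D → ℕ) (v : Fin D → ℝ) (d : Fin D) (k : ℕ) :
    Hb θ (α + Pi.single d k) v
      = hermiteFun θ (α d + k) (v d) * ∏ j ∈ Finset.univ.erase d, hermiteFun θ (α j) (v j) := by
  rw [Hb_eq_prod, ← Finset.mul_prod_erase _ _ (Finset.mem_univ d)]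
  congr 1
  · simp
  · refine Finset.prod_congr rfl fun j hj => ?_
    simp [Finset.ne_of_mem_erase hj]

theorem mul_sqrt_mul_Hb_add_single_one {θ : ℝ} (hθ : 0 < θ) (α : Fin D → ℕ) (v : Fin D → ℝ)
    (d : Fin D) :
    v d * Real.sqrt θ * Hb θ (α + Pi.single d 1) v
      = θ * Hb θ (α + Pi.single d 2) v + (α d + 1) * Hb θ α v := by
  have hα : Hb θ α v = Hb θ (α + Pi.single d 0) v := by simp
  rw [hα, Hb_add_single, Hb_add_single, Hb_add_single, add_zero]
  linear_combination (∏ j ∈ Finset.univ.erase d, hermiteFun θ (α j) (v j)) *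
    mul_sqrt_mul_hermiteFun_succ hθ (α d) (v d)

theorem hasDerivAt_Hb_comp {θ : ℝ} (hθ : 0 < θ) (α : Fin D → ℕ) {x : ℝ → Fin D → ℝ}
    {x' : Fin D → ℝ} {τ : ℝ} (hx : ∀ d, HasDerivAt (fun t => x t d) (x' d) τ) :
    HasDerivAt (fun t => Hb θ α (x t))
      (-∑ d, Real.sqrt θ * x' d * Hb θ (α + Pi.single d 1) (x τ)) τ := by
  have hfactor : ∀ d ∈ Finset.univ, HasDerivAt (fun t => hermiteFun θ (α d) (x t d))
      (-(Real.sqrt θ * hermiteFun θ (α d + 1) (x τ d)) * x' d) τ :=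
    fun d _ => ((hasDerivAt_hermiteFun hθ (α d) (x τ d)).comp τ (hx d) :)
  refine (HasDerivAt.fun_finsetProd hfactor).congr_deriv ?_
  rw [← Finset.sum_neg_distrib]
  refine Finset.sum_congr rfl fun d _ => ?_
  rw [Hb_add_single, smul_eq_mul]
  ring

end Hb

theorem stmt15_general (D : ℕ) (θ₁ : ℝ) (hθ₁ : 0 < θ₁) (θh : ℝ) (hθh : 0 < θh)
    (w v : Fin D → ℝ)
    (A : ℝ → Fin D → ℝ)
    (hA : ∀ τ, A τ = fun d => ((θh - 1) * τ + 1) * v d + w d * τ)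
    (R S : ℝ → ℝ)
    (hR : ∀ τ, R τ = (θh - 1) / ((θh - 1) * τ + 1))
    (hS : ∀ τ, S τ = 1 / ((θh - 1) * τ + 1)) :
    ∀ α : Fin D → ℕ, ∀ τ ∈ Set.Icc (0 : ℝ) 1,
      HasDerivWithinAt (fun t => Hb θ₁ α (A t))
        (-∑ d : Fin D,
          (θ₁ * R τ * Hb θ₁ (fun i => α i + (if i = d then 2 else 0)) (A τ)
            + w d * Real.sqrt θ₁ * S τ *
              Hb θ₁ (fun i => α i + (if i = d then 1 else 0)) (A τ)
            + ((α d : ℝ) + 1) * R τ * Hb θ₁ α (A τ)))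
        (Set.Icc (0 : ℝ) 1) τ := by
  rintro α τ ⟨hτ0, hτ1⟩
  -- `(θ̂ - 1)τ + 1 = θ̂τ + (1 - τ)`
  have hg : 0 < (θh - 1) * τ + 1 := by
    nlinarith [mul_nonneg hθh.le hτ0, mul_nonneg hθh.le (sub_nonneg.2 hτ1)]
  have hA' : ∀ d, HasDerivAt (fun t => A t d) ((θh - 1) * v d + w d) τ := by
    intro d
    simp only [hA]
    exact (((((hasDerivAt_id τ).const_mul (θh - 1)).add_const 1).mul_const (v d)).add
      ((hasDerivAt_id τ).const_mul (w d))).congr_deriv (by simp)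
  have hsingle : ∀ d k, (fun i => α i + if i = d then k else 0) = α + Pi.single d k := by
    intro d k
    funext i
    simp [Pi.single_apply]
  refine (hasDerivAt_Hb_comp hθ₁ α hA').hasDerivWithinAt.congr_deriv ?_
  simp only [hsingle, hR, hS]
  congr 1
  refine Finset.sum_congr rfl fun d _ => ?_
  have hrec := mul_sqrt_mul_Hb_add_single_one hθ₁ α (A τ) d
  have hAd : A τ d = ((θh - 1) * τ + 1) * v d + w d * τ := by rw [hA]
  -- after clearing `(θ̂ - 1)τ + 1` this is `(θ̂ - 1) • hrec`, with `A_d` expanded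
  field_simp
  linear_combination
    (θh - 1) * hrec - (θh - 1) * Real.sqrt θ₁ * Hb θ₁ (α + Pi.single d 1) (A τ) * hAd

/-- with `A_d(τ) = ((θ̂−1)τ+1)v_d + w_d τ`, `R(τ) = (θ̂−1)/((θ̂−1)τ+1)` and
`S(τ) = 1/((θ̂−1)τ+1)`, for every multi-index `α` and `τ ∈ [0,1]`:
`∂/∂τ 𝓗_{θ₁,α}(A) = −Σ_d [θ₁ R 𝓗_{θ₁,α+2e_d}(A) + w_d √θ₁ S 𝓗_{θ₁,α+e_d}(A)
+ (α_d+1) R 𝓗_{θ₁,α}(A)]`. -/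
theorem stmt15 (D : ℕ) (hD : 1 ≤ D) (θ₁ : ℝ) (hθ₁ : 0 < θ₁) (θh : ℝ) (hθh : 0 < θh)
    (w v : Fin D → ℝ)
    (A : ℝ → Fin D → ℝ)
    (hA : ∀ τ, A τ = fun d => ((θh - 1) * τ + 1) * v d + w d * τ)
    (R S : ℝ → ℝ)
    (hR : ∀ τ, R τ = (θh - 1) / ((θh - 1) * τ + 1))
    (hS : ∀ τ, S τ = 1 / ((θh - 1) * τ + 1)) :
    ∀ α : Fin D → ℕ, ∀ τ ∈ Set.Icc (0 : ℝ) 1,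
      HasDerivWithinAt (fun t => Hb θ₁ α (A t))
        (-∑ d : Fin D,
          (θ₁ * R τ * Hb θ₁ (fun i => α i + (if i = d then 2 else 0)) (A τ)
            + w d * Real.sqrt θ₁ * S τ *
              Hb θ₁ (fun i => α i + (if i = d then 1 else 0)) (A τ)
            + ((α d : ℝ) + 1) * R τ * Hb θ₁ α (A τ)))
        (Set.Icc (0 : ℝ) 1) τ :=
  stmt15_general D θ₁ hθ₁ θh hθh w v A hA R S hR hS
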